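/- The function g(t) = −π^{3/2}/(2√2 (1 + cosh(πt))) has Fourier transform ĝ(ν) = (2π)^{-1/2} ∫_{-∞}^{∞} g(t) e^{-iνt} dt = −ν/(2 sinh ν) for all real ν ≠ 0 (with value −1/2 at ν = 0 by continuity). -/

import Mathlib

open Real Complex MeasureTheory

noncomputable def gFilter (t : ℝ) : ℝ :=
  -(π ^ ((3 : ℝ) / 2)) / (2 * Real.sqrt 2 * (1 + Real.cosh (π * t)))

/-!
Since `1 + cosh x = (1 + e^{-x})² / (2 e^{-x})`, the substitution `u = e^{-πt}` turns the Fourier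
integral into the Mellin transform of `(1 + u)⁻²` at `s = 1 + iν/π`. The further substitution
`x = u / (1 + u)` identifies that Mellin transform with the beta integral
`B(s, 2 - s) = Γ(s)Γ(2 - s)`, and the reflection formula gives
`Γ(1 + z)Γ(1 - z) = πz / sin(πz)`, which at `z = iν/π` is `ν / sinh ν`.
-/

open Set

lemma image_div_one_add_Ioi : (fun u : ℝ => u / (1 + u)) '' Ioi 0 = Ioo 0 1 := by
  ext x
  constructor
  · rintro ⟨u, hu : 0 < u, rfl⟩
    exact ⟨by positivity, (div_lt_one (by linarith)).2 (by linarith)⟩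
  · rintro ⟨hx0, hx1⟩
    refine ⟨x / (1 - x), div_pos hx0 (by linarith), ?_⟩
    field_simp
    ring

lemma injOn_div_one_add_Ioi : InjOn (fun u : ℝ => u / (1 + u)) (Ioi 0) := by
  intro a (ha : 0 < a) b (hb : 0 < b) h
  field_simp at h
  linarith

lemma hasDerivAt_div_one_add {u : ℝ} (hu : 1 + u ≠ 0) :
    HasDerivAt (fun u : ℝ => u / (1 + u)) ((1 + u) ^ 2)⁻¹ u :=
  ((hasDerivAt_id' u).div ((hasDerivAt_id' u).const_add 1) hu).congr_deriv (by ring)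

lemma ofReal_inv_cpow {w : ℝ} (hw : 0 < w) (r : ℂ) :
    ((w⁻¹ : ℝ) : ℂ) ^ r = (w : ℂ) ^ (-r) := by
  rw [ofReal_inv, inv_cpow _ _ (by rw [arg_ofReal_of_nonneg hw.le]; exact pi_ne_zero.symm),
    cpow_neg]

theorem Complex.betaIntegral_eq_integral_Ioi (s t : ℂ) :
    betaIntegral s t = ∫ u in Ioi (0 : ℝ), (u : ℂ) ^ (s - 1) / (1 + (u : ℂ)) ^ (s + t) := by
  rw [betaIntegral, intervalIntegral.integral_of_le zero_le_one, integral_Ioc_eq_integral_Ioo,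
    ← image_div_one_add_Ioi, integral_image_eq_integral_abs_deriv_smul measurableSet_Ioi
      (fun u (hu : 0 < u) => (hasDerivAt_div_one_add (by linarith)).hasDerivWithinAt)
      injOn_div_one_add_Ioi]
  refine setIntegral_congr_fun measurableSet_Ioi fun u (hu : 0 < u) => ?_
  have hw : 0 < 1 + u := by linarith
  have hw' : (1 + u : ℂ) ≠ 0 := by exact_mod_cast hw.ne'
  have hx : 1 - ((u / (1 + u) : ℝ) : ℂ) = (((1 + u)⁻¹ : ℝ) : ℂ) := by
    push_cast; field_simp; ring
  have hjac : ((((1 + u) ^ 2)⁻¹ : ℝ) : ℂ) = ((1 + u : ℝ) : ℂ) ^ (-2 : ℂ) := by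
    rw [cpow_neg, cpow_two]; push_cast; rfl
  rw [abs_of_pos (by positivity), real_smul, hx, div_eq_mul_inv u, ofReal_mul,
    mul_cpow_ofReal_nonneg hu.le (by positivity), ofReal_inv_cpow hw, ofReal_inv_cpow hw, hjac]
  push_cast
  rw [div_eq_mul_inv, ← cpow_neg, mul_comm, mul_assoc, ← cpow_add _ _ hw', mul_assoc,
    ← cpow_add _ _ hw']
  ring_nf

lemma ofReal_exp_cpow (x : ℝ) (s : ℂ) : ((rexp x : ℝ) : ℂ) ^ s = cexp (x * s) := by
  rw [ofReal_exp, cpow_def_of_ne_zero (Complex.exp_ne_zero _),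
    Complex.log_exp (by simp [pi_pos]) (by simp [pi_nonneg])]

lemma image_exp_neg_mul_univ {a : ℝ} (ha : a ≠ 0) :
    (fun t => rexp (-(a * t))) '' univ = Ioi 0 := by
  ext x
  simp only [image_univ, mem_range, mem_Ioi]
  refine ⟨fun ⟨t, ht⟩ => ht ▸ Real.exp_pos _, fun hx => ⟨-Real.log x / a, ?_⟩⟩
  rw [mul_div_cancel₀ _ ha, neg_neg, Real.exp_log hx]

theorem mellin_eq_integral_cexp {E : Type*} [NormedAddCommGroup E] [NormedSpace ℂ E]
    (f : ℝ → E) (s : ℂ) {a : ℝ} (ha : 0 < a) :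
    mellin f s = a • ∫ t : ℝ, cexp (-(a * t * s)) • f (rexp (-(a * t))) := by
  have hderiv : ∀ t ∈ univ,
      HasDerivWithinAt (fun t => rexp (-(a * t))) (rexp (-(a * t)) * -a) univ t :=
    fun t _ => by simpa [mul_comm] using ((hasDerivAt_id' t).const_mul a).neg.exp
  have hinj : InjOn (fun t => rexp (-(a * t))) univ := fun t _ t' _ h => by
    simpa [ha.ne'] using Real.exp_injective h
  rw [mellin, ← image_exp_neg_mul_univ ha.ne', integral_image_eq_integral_abs_deriv_smul
    MeasurableSet.univ hderiv hinj, setIntegral_univ, ← integral_smul]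
  congr 1 with t
  rw [abs_of_nonpos (by nlinarith [Real.exp_pos (-(a * t))]), ofReal_exp_cpow,
    ← Complex.coe_smul, ← Complex.coe_smul, smul_smul, smul_smul]
  congr 1
  push_cast
  rw [show -(a * t * s : ℂ) = -(a * t) * (s - 1) + -(a * t) by ring, Complex.exp_add]
  ring

theorem mellin_inv_one_add_sq {s : ℂ} (hs0 : 0 < s.re) (hs2 : s.re < 2) :
    mellin (fun u : ℝ => ((1 + u : ℂ) ^ 2)⁻¹) s = Gamma s * Gamma (2 - s) := by
  rw [Gamma_mul_Gamma_eq_betaIntegral hs0 (by simpa), add_sub_cancel,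
    Complex.Gamma_ofNat_eq_factorial 1, Nat.factorial_one, Nat.cast_one, one_mul,
    betaIntegral_eq_integral_Ioi, add_sub_cancel, mellin]
  simp only [smul_eq_mul, div_eq_mul_inv, cpow_two]

theorem Complex.Gamma_one_add_mul_Gamma_one_sub {z : ℂ} (hz : z ≠ 0) :
    Gamma (1 + z) * Gamma (1 - z) = π * z / Complex.sin (π * z) := by
  rw [add_comm, Gamma_add_one z hz, mul_assoc, Gamma_mul_Gamma_one_sub]
  ring

theorem Complex.Gamma_one_add_mul_I_mul_Gamma_one_sub_mul_I {x : ℝ} (hx : x ≠ 0) :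
    Gamma (1 + x * I) * Gamma (1 - x * I) = π * x / Complex.sinh (π * x) := by
  have hsinh : Complex.sinh (π * x) ≠ 0 := by
    exact_mod_cast Real.sinh_ne_zero.2 (mul_ne_zero pi_ne_zero hx)
  rw [Gamma_one_add_mul_Gamma_one_sub (by simpa), ← mul_assoc, sin_mul_I]
  field_simp

lemma inv_two_mul_one_add_cosh (x : ℝ) :
    (2 * (1 + Real.cosh x))⁻¹ = rexp (-x) / (1 + rexp (-x)) ^ 2 := by
  rw [Real.cosh_eq, Real.exp_neg]
  field_simp
  ring

lemma gFilter_eq (t : ℝ) :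
    gFilter t =
      -(π ^ ((3 : ℝ) / 2) / √2) * (rexp (-(π * t)) / (1 + rexp (-(π * t))) ^ 2) := by
  rw [gFilter, ← inv_two_mul_one_add_cosh]
  field_simp

lemma integral_gFilter_mul_cexp (ν : ℝ) :
    ∫ t : ℝ, (gFilter t : ℂ) * cexp (-(I * ν * t)) =
      (-(π ^ ((3 : ℝ) / 2) / √2) / π : ℝ) *
        mellin (fun u : ℝ => ((1 + u : ℂ) ^ 2)⁻¹) (1 + (ν / π : ℝ) * I) := by
  rw [mellin_eq_integral_cexp _ _ pi_pos, ← Complex.coe_smul, smul_eq_mul, ← mul_assoc,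
    ← integral_const_mul]
  congr 1 with t
  have hexp : -(π * t * (1 + (ν / π : ℝ) * I) : ℂ) = -(π * t) + -(I * ν * t) := by
    push_cast
    field_simp
    ring
  rw [gFilter_eq, smul_eq_mul, hexp, Complex.exp_add]
  push_cast
  field_simp

lemma inv_sqrt_two_pi_mul_neg_pi_rpow_div :
    (√(2 * π))⁻¹ * (-(π ^ ((3 : ℝ) / 2) / √2) / π) = -1 / 2 := by
  have h32 : π ^ ((3 : ℝ) / 2) = π * √π := by
    rw [Real.sqrt_eq_rpow, show (3 : ℝ) / 2 = 1 + 1 / 2 by norm_num, Real.rpow_add pi_pos,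
      Real.rpow_one]
  rw [Real.sqrt_mul zero_le_two, h32]
  field_simp
  rw [Real.sq_sqrt zero_le_two]

/-- **Fourier transform of the filter:** with the convention
`ĝ(ν) = (2π)^{-1/2} ∫ g(t) e^{-iνt} dt`, one has `ĝ(ν) = −ν/(2 sinh ν)` for `ν ≠ 0`,
and `ĝ(0) = −1/2` (the limiting value). -/
theorem gFilter_fourierTransform (ν : ℝ) :
    ((Real.sqrt (2 * π) : ℂ))⁻¹ * ∫ t : ℝ, (gFilter t : ℂ) * Complex.exp (-(I * ν * t)) =
      if ν = 0 then (-1 / 2 : ℂ) else ((-ν / (2 * Real.sinh ν) : ℝ) : ℂ) := by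
  rw [integral_gFilter_mul_cexp, mellin_inv_one_add_sq (by simp) (by simp),
    show (2 : ℂ) - (1 + (ν / π : ℝ) * I) = 1 - (ν / π : ℝ) * I by ring, ← mul_assoc,
    ← ofReal_inv, ← ofReal_mul, inv_sqrt_two_pi_mul_neg_pi_rpow_div]
  split_ifs with hν
  · simp [hν]
  · rw [Gamma_one_add_mul_I_mul_Gamma_one_sub_mul_I (div_ne_zero hν pi_ne_zero)]
    push_cast
    field_simp
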